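/- Let M₁,…,Mₖ and M'₁,…,M'ₖ be positive semidefinite operators on a finite-dimensional complex Hilbert space with ∑ᵢ Tr(Mᵢ) ≤ 1, ∑ᵢ Tr(M'ᵢ) ≤ 1, and ∑ᵢ ‖Mᵢ − M'ᵢ‖₁ ≤ 2ε. Then ∑ᵢ ( ‖√Mᵢ‖₂ + ‖√M'ᵢ‖₂ ) · ‖√Mᵢ − √M'ᵢ‖₂ ≤ √(8ε). -/

import Mathlib

open Matrix
open scoped ComplexOrder

/-- The square root of a positive semidefinite matrix (as in Mathlib of December 2024). -/
noncomputable def Matrix.PosSemidef.sqrt {n 𝕜 : Type*} [RCLike 𝕜] [Fintype n] [DecidableEq n]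
    {A : Matrix n n 𝕜} (hA : A.PosSemidef) : Matrix n n 𝕜 :=
  hA.1.eigenvectorUnitary.1 * diagonal ((↑) ∘ (√·) ∘ hA.1.eigenvalues) *
  (star hA.1.eigenvectorUnitary : Matrix n n 𝕜)

/-- The trace (nuclear) norm of a complex matrix: the trace of `√(AᴴA)`. -/
noncomputable def traceNorm {n : Type*} [Fintype n] [DecidableEq n]
    (A : Matrix n n ℂ) : ℝ :=
  ((Matrix.posSemidef_conjTranspose_mul_self A).sqrt.trace).re

/-- The Frobenius (Hilbert–Schmidt) norm of a complex matrix. -/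
noncomputable def frobNorm {n : Type*} [Fintype n] [DecidableEq n]
    (A : Matrix n n ℂ) : ℝ :=
  Real.sqrt ((Aᴴ * A).trace).re

/-!
By Cauchy–Schwarz the sum is at most `(∑ᵢ (‖√Mᵢ‖₂ + ‖√M'ᵢ‖₂)²)^½ (∑ᵢ ‖√Mᵢ - √M'ᵢ‖₂²)^½`.
Since `‖√M‖₂² = Tr M`, the first factor is at most `2`; the second is at most `√(2ε)` by the
Powers–Størmer inequality `‖√A - √B‖₂² ≤ ‖A - B‖₁`.

For Powers–Størmer, take an orthonormal eigenbasis `(vᵢ, λᵢ)` of `D = √A - √B`. From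
`A - B = √A D + D √B` one gets `⟨vᵢ, (A - B) vᵢ⟩ = λᵢ (⟨vᵢ, √A vᵢ⟩ + ⟨vᵢ, √B vᵢ⟩)`, whose absolute
value is at least `λᵢ²` because `λᵢ = ⟨vᵢ, √A vᵢ⟩ - ⟨vᵢ, √B vᵢ⟩` is a difference of nonnegative
numbers. Finally `∑ᵢ |⟨vᵢ, C vᵢ⟩| ≤ Tr |C|` for Hermitian `C`, as `|C| ± C = 2 C^±` are positive.
-/

open scoped MatrixOrder

namespace Matrix

variable {𝕜 n : Type*} [RCLike 𝕜] [Fintype n]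

lemma trace_eq_sum_star_dotProduct_mulVec [DecidableEq n] (X : Matrix n n 𝕜)
    (b : OrthonormalBasis n 𝕜 (EuclideanSpace 𝕜 n)) :
    X.trace = ∑ i, star ⇑(b i) ⬝ᵥ (X *ᵥ ⇑(b i)) := by
  have h := LinearMap.trace_eq_sum_inner (toLpLin 2 2 X) b
  rw [toLpLin_eq_toLin, trace_toLin_eq] at h
  rw [h]
  simp only [EuclideanSpace.inner_eq_star_dotProduct, ← toLpLin_eq_toLin, toLpLin_apply,
    dotProduct_comm]

lemma IsHermitian.star_dotProduct_mulVec {D : Matrix n n 𝕜} (hD : D.IsHermitian) (v w : n → 𝕜) :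
    star v ⬝ᵥ (D *ᵥ w) = star (D *ᵥ v) ⬝ᵥ w := by
  rw [dotProduct_mulVec, star_mulVec, hD.eq]

lemma sq_le_abs_re_star_dotProduct_mul_self_sub_mul_self_mulVec {P Q : Matrix n n 𝕜}
    (hP : P.PosSemidef) (hQ : Q.PosSemidef) {v : n → 𝕜} {μ : ℝ}
    (hv : (P - Q) *ᵥ v = μ • v) (hv1 : star v ⬝ᵥ v = 1) :
    μ ^ 2 ≤ |RCLike.re (star v ⬝ᵥ ((P * P - Q * Q) *ᵥ v))| := by
  set p := RCLike.re (star v ⬝ᵥ (P *ᵥ v))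
  set q := RCLike.re (star v ⬝ᵥ (Q *ᵥ v))
  have hp : 0 ≤ p := hP.re_dotProduct_nonneg v
  have hq : 0 ≤ q := hQ.re_dotProduct_nonneg v
  have hμ : μ = p - q := by
    have := congrArg (fun w : n → 𝕜 => RCLike.re (star v ⬝ᵥ w)) hv
    simpa [sub_mulVec, dotProduct_sub, hv1, RCLike.smul_re, p, q] using this.symm
  have hsplit : P * P - Q * Q = P * (P - Q) + (P - Q) * Q := by noncomm_ring
  have hform : RCLike.re (star v ⬝ᵥ ((P * P - Q * Q) *ᵥ v)) = μ * (p + q) := by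
    rw [hsplit, add_mulVec, ← mulVec_mulVec, ← mulVec_mulVec, dotProduct_add,
      (hP.1.sub hQ.1).star_dotProduct_mulVec, hv]
    simp [mulVec_smul, RCLike.smul_re, p, q, mul_add]
  rw [hform, abs_mul, abs_of_nonneg (add_nonneg hp hq), ← sq_abs, sq]
  gcongr
  exact abs_le.2 ⟨by linarith, by linarith⟩

variable [DecidableEq n]

lemma PosSemidef.sqrt_eq_cfcSqrt {A : Matrix n n 𝕜} (hA : A.PosSemidef) :
    hA.sqrt = CFC.sqrt A := by
  rw [CFC.sqrt_eq_real_sqrt A hA.nonneg, cfcₙ_eq_cfc, hA.1.cfc_eq]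
  simp [IsHermitian.cfc, PosSemidef.sqrt, Function.comp_def]

lemma PosSemidef.posSemidef_sqrt {A : Matrix n n 𝕜} (hA : A.PosSemidef) : hA.sqrt.PosSemidef := by
  rw [hA.sqrt_eq_cfcSqrt, ← nonneg_iff_posSemidef]
  exact CFC.sqrt_nonneg A

lemma PosSemidef.sqrt_mul_sqrt {A : Matrix n n 𝕜} (hA : A.PosSemidef) : hA.sqrt * hA.sqrt = A := by
  rw [hA.sqrt_eq_cfcSqrt]
  exact CFC.sqrt_mul_sqrt_self A hA.nonneg

lemma IsHermitian.abs_re_star_dotProduct_mulVec_le {C : Matrix n n 𝕜} (hC : C.IsHermitian)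
    (v : n → 𝕜) :
    |RCLike.re (star v ⬝ᵥ (C *ᵥ v))| ≤ RCLike.re (star v ⬝ᵥ (CFC.abs C *ᵥ v)) := by
  have hC' : IsSelfAdjoint C := hC
  have hpos : 0 ≤ RCLike.re (star v ⬝ᵥ ((CFC.abs C + C) *ᵥ v)) := by
    rw [CFC.abs_add_self C]
    exact (nonneg_iff_posSemidef.1 <| smul_nonneg zero_le_two <| CFC.posPart_nonneg C)
      |>.re_dotProduct_nonneg v
  have hneg : 0 ≤ RCLike.re (star v ⬝ᵥ ((CFC.abs C - C) *ᵥ v)) := by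
    rw [CFC.abs_sub_self C]
    exact (nonneg_iff_posSemidef.1 <| smul_nonneg zero_le_two <| CFC.negPart_nonneg C)
      |>.re_dotProduct_nonneg v
  rw [add_mulVec, dotProduct_add, map_add] at hpos
  rw [sub_mulVec, dotProduct_sub, map_sub] at hneg
  exact abs_le.2 ⟨by linarith, by linarith⟩

end Matrix

section

variable {n : Type*} [Fintype n] [DecidableEq n]

lemma traceNorm_eq_re_trace_cfcAbs (A : Matrix n n ℂ) : traceNorm A = (CFC.abs A).trace.re := by
  rw [traceNorm, PosSemidef.sqrt_eq_cfcSqrt, CFC.abs, star_eq_conjTranspose]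

lemma Matrix.IsHermitian.sum_abs_re_star_dotProduct_mulVec_le_traceNorm {C : Matrix n n ℂ}
    (hC : C.IsHermitian) (b : OrthonormalBasis n ℂ (EuclideanSpace ℂ n)) :
    ∑ i, |(star ⇑(b i) ⬝ᵥ (C *ᵥ ⇑(b i))).re| ≤ traceNorm C := by
  rw [traceNorm_eq_re_trace_cfcAbs, trace_eq_sum_star_dotProduct_mulVec _ b, Complex.re_sum]
  gcongr with i
  exact hC.abs_re_star_dotProduct_mulVec_le _

theorem re_trace_sub_mul_sub_le_traceNorm {P Q : Matrix n n ℂ} (hP : P.PosSemidef)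
    (hQ : Q.PosSemidef) : ((P - Q) * (P - Q)).trace.re ≤ traceNorm (P * P - Q * Q) := by
  have hD := hP.1.sub hQ.1
  set b := hD.eigenvectorBasis
  have hb : ∀ i, star ⇑(b i) ⬝ᵥ ⇑(b i) = 1 := fun i => by
    rw [dotProduct_comm]; exact b.inner_eq_one i
  have hv : ∀ i, (P - Q) *ᵥ ⇑(b i) = hD.eigenvalues i • ⇑(b i) := hD.mulVec_eigenvectorBasis
  have hsq : ∀ i, (star ⇑(b i) ⬝ᵥ ((P - Q) * (P - Q)) *ᵥ ⇑(b i)).re = hD.eigenvalues i ^ 2 := by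
    intro i
    rw [← mulVec_mulVec, hv, mulVec_smul, hv]
    simp [hb, sq]
  calc ((P - Q) * (P - Q)).trace.re = ∑ i, hD.eigenvalues i ^ 2 := by
        rw [trace_eq_sum_star_dotProduct_mulVec _ b, Complex.re_sum]
        simp only [hsq]
    _ ≤ ∑ i, |(star ⇑(b i) ⬝ᵥ ((P * P - Q * Q) *ᵥ ⇑(b i))).re| := by
        gcongr with i
        exact sq_le_abs_re_star_dotProduct_mul_self_sub_mul_self_mulVec hP hQ (hv i) (hb i)
    _ ≤ traceNorm (P * P - Q * Q) := by
        refine IsHermitian.sum_abs_re_star_dotProduct_mulVec_le_traceNorm ?_ b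
        simpa only [sq] using (hP.1.pow 2).sub (hQ.1.pow 2)

lemma frobNorm_sq (A : Matrix n n ℂ) : frobNorm A ^ 2 = (Aᴴ * A).trace.re :=
  Real.sq_sqrt (Complex.nonneg_iff.1 (posSemidef_conjTranspose_mul_self A).trace_nonneg).1

lemma Matrix.PosSemidef.frobNorm_sqrt_sq {A : Matrix n n ℂ} (hA : A.PosSemidef) :
    frobNorm hA.sqrt ^ 2 = A.trace.re := by
  rw [frobNorm_sq, hA.posSemidef_sqrt.1.eq, hA.sqrt_mul_sqrt]

lemma Matrix.PosSemidef.frobNorm_sqrt_sub_sqrt_sq_le {A B : Matrix n n ℂ} (hA : A.PosSemidef)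
    (hB : B.PosSemidef) : frobNorm (hA.sqrt - hB.sqrt) ^ 2 ≤ traceNorm (A - B) := by
  rw [frobNorm_sq, (hA.posSemidef_sqrt.1.sub hB.posSemidef_sqrt.1).eq]
  simpa only [hA.sqrt_mul_sqrt, hB.sqrt_mul_sqrt] using
    re_trace_sub_mul_sub_le_traceNorm hA.posSemidef_sqrt hB.posSemidef_sqrt

end

lemma Finset.sum_add_mul_le_sqrt {ι : Type*} (s : Finset ι) (a b c : ι → ℝ) :
    ∑ i ∈ s, (a i + b i) * c i ≤
      √(2 * (∑ i ∈ s, a i ^ 2 + ∑ i ∈ s, b i ^ 2) * ∑ i ∈ s, c i ^ 2) := by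
  refine Real.le_sqrt_of_sq_le ((sum_mul_sq_le_sq_mul_sq s _ c).trans ?_)
  gcongr
  rw [← sum_add_distrib, mul_sum]
  exact sum_le_sum fun i _ => add_sq_le

theorem duplication_final_estimate_general
    {n : Type*} [Fintype n] [DecidableEq n] (k : ℕ)
    (M M' : Fin k → Matrix n n ℂ)
    (hM : ∀ i, (M i).PosSemidef) (hM' : ∀ i, (M' i).PosSemidef)
    (htr : ∑ i, ((M i).trace).re ≤ 1) (htr' : ∑ i, ((M' i).trace).re ≤ 1)
    (ε : ℝ)
    (hclose : ∑ i, traceNorm (M i - M' i) ≤ 2 * ε) :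
    ∑ i, (frobNorm (hM i).sqrt + frobNorm (hM' i).sqrt) *
        frobNorm ((hM i).sqrt - (hM' i).sqrt) ≤ Real.sqrt (8 * ε) := by
  have hdist : ∑ i, frobNorm ((hM i).sqrt - (hM' i).sqrt) ^ 2 ≤ 2 * ε :=
    (Finset.sum_le_sum fun i _ => (hM i).frobNorm_sqrt_sub_sqrt_sq_le (hM' i)).trans hclose
  have hdist₀ : 0 ≤ ∑ i, frobNorm ((hM i).sqrt - (hM' i).sqrt) ^ 2 :=
    Finset.sum_nonneg fun i _ => sq_nonneg _
  refine (Finset.univ.sum_add_mul_le_sqrt _ _ _).trans (Real.sqrt_le_sqrt ?_)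
  simp only [fun i => (hM i).frobNorm_sqrt_sq, fun i => (hM' i).frobNorm_sqrt_sq]
  nlinarith

theorem duplication_final_estimate
    {n : Type*} [Fintype n] [DecidableEq n] (k : ℕ)
    (M M' : Fin k → Matrix n n ℂ)
    (hM : ∀ i, (M i).PosSemidef) (hM' : ∀ i, (M' i).PosSemidef)
    (htr : ∑ i, ((M i).trace).re ≤ 1) (htr' : ∑ i, ((M' i).trace).re ≤ 1)
    (ε : ℝ) (hε : 0 ≤ ε)
    (hclose : ∑ i, traceNorm (M i - M' i) ≤ 2 * ε) :
    ∑ i, (frobNorm (hM i).sqrt + frobNorm (hM' i).sqrt) *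
        frobNorm ((hM i).sqrt - (hM' i).sqrt) ≤ Real.sqrt (8 * ε) :=
  duplication_final_estimate_general k M M' hM hM' htr htr' ε hclose
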